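/- Assume the backward spiral condition: V_{−k} = M⁻¹·T̄(V_{N−k+1}) for all k ≥ 1. For i ∈ ℤ let w_i := (c_i, b_i, 0)ᵀ and let ℬ_{−i} be the 3×3 matrix with columns c_{N−i+2}·d_{N−i−1}·w_{N−i−1}, c_{N−i+3}·d_{N−i}·K_{N−i−1}·w_{N−i}, and c_{N−i+4}·d_{N−i+1}·K_{N−i−1}·K_{N−i}·w_{N−i+1}. Then ρ_{−i} = M⁻¹·ρ_{N−i−1}·ℬ_{−i} for every integer i ≥ 3, and K_{−i} = ℬ_{−i}⁻¹·K_{N−i−1}·ℬ_{−i+1} for every integer 4 ≤ i ≤ N such that ℬ_{−i} is invertible. -/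
import Mathlib


open Matrix

/-- The 3×3 matrix with columns `u, v, w`. -/
def colMat (u v w : Fin 3 → ℝ) : Matrix (Fin 3) (Fin 3) ℝ :=
  Matrix.of fun i j => ![u, v, w] j i


lemma mul_colMat (A : Matrix (Fin 3) (Fin 3) ℝ) (u v w : Fin 3 → ℝ) :
    A * colMat u v w = colMat (A.mulVec u) (A.mulVec v) (A.mulVec w) := by
  ext i j
  fin_cases j <;>
    simp [colMat, Matrix.mul_apply, Matrix.mulVec, dotProduct, Fin.sum_univ_three]

lemma colMat_mulVec_w (u v z : Fin 3 → ℝ) (x y : ℝ) :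
    (colMat u v z).mulVec ![x, y, 0] = x • u + y • v := by
  ext i
  simp [colMat, Matrix.mulVec, dotProduct, Fin.sum_univ_three]
  ring

lemma cross_key (p q r : Fin 3 → ℝ) (a0 b0 c0 : ℝ) :
    crossProduct (crossProduct r (a0 • r + b0 • q + c0 • p)) (crossProduct p q)
      = (colMat p q r).det • (c0 • p + b0 • q) := by
  ext i
  fin_cases i <;>
    (simp [cross_apply, colMat, Matrix.det_fin_three]; ring)

lemma colMat_step (u v z : Fin 3 → ℝ) (A B C : ℝ) :
    colMat v z (A • z + B • v + C • u) = colMat u v z * !![0, 0, C; 1, 0, B; 0, 1, A] := by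
  ext i k
  fin_cases k <;> (simp [colMat, Matrix.mul_apply, Fin.sum_univ_three]; try ring)

/-- under the backward spiral condition `V_{−k} = M⁻¹·T̄(V_{N−k+1})`
for all `k ≥ 1`, with `ℬ_{−i}` the matrix with columns
`c_{N−i+2}·d_{N−i−1}·w_{N−i−1}`, `c_{N−i+3}·d_{N−i}·K_{N−i−1}·w_{N−i}`, and
`c_{N−i+4}·d_{N−i+1}·K_{N−i−1}·K_{N−i}·w_{N−i+1}` where `w_i = (c_i, b_i, 0)ᵀ`,
one has `ρ_{−i} = M⁻¹·ρ_{N−i−1}·ℬ_{−i}` for every integer `i ≥ 3`, and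
`K_{−i} = ℬ_{−i}⁻¹·K_{N−i−1}·ℬ_{−i+1}` for every `4 ≤ i ≤ N` with `ℬ_{−i}`
invertible. Here `ℬ i` denotes `ℬ_{−i}`. -/
theorem backward_gauge (N : ℕ) (hN : 5 ≤ N)
    (V : ℤ → Fin 3 → ℝ) (a b c : ℤ → ℝ)
    (hrec : ∀ j : ℤ, V (j + 3) = a j • V (j + 2) + b j • V (j + 1) + c j • V j)
    (ρ : ℤ → Matrix (Fin 3) (Fin 3) ℝ)
    (hρ : ∀ j : ℤ, ρ j = colMat (V j) (V (j + 1)) (V (j + 2)))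
    (hρinv : ∀ j : ℤ, IsUnit (ρ j))
    (d : ℤ → ℝ) (hd : ∀ j : ℤ, d j = (ρ j).det)
    (K : ℤ → Matrix (Fin 3) (Fin 3) ℝ)
    (hK : ∀ j : ℤ, K j = !![0, 0, c j; 1, 0, b j; 0, 1, a j])
    (M : Matrix (Fin 3) (Fin 3) ℝ) (hM : M.det = 1)
    (Tbar : ℤ → Fin 3 → ℝ)
    (hTbar : ∀ j : ℤ, Tbar j =
      c (j + 1) • crossProduct (crossProduct (V j) (V (j + 1)))
        (crossProduct (V (j - 2)) (V (j - 1))))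
    (hbwd : ∀ k : ℤ, 1 ≤ k → V (-k) = M⁻¹.mulVec (Tbar ((N : ℤ) - k + 1)))
    (w : ℤ → Fin 3 → ℝ) (hw : ∀ i : ℤ, w i = ![c i, b i, 0])
    (ℬ : ℤ → Matrix (Fin 3) (Fin 3) ℝ)
    (hℬ : ∀ i : ℤ, ℬ i =
      colMat ((c ((N : ℤ) - i + 2) * d ((N : ℤ) - i - 1)) • w ((N : ℤ) - i - 1))
        ((c ((N : ℤ) - i + 3) * d ((N : ℤ) - i)) • (K ((N : ℤ) - i - 1)).mulVec (w ((N : ℤ) - i)))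
        ((c ((N : ℤ) - i + 4) * d ((N : ℤ) - i + 1)) •
          ((K ((N : ℤ) - i - 1) * K ((N : ℤ) - i)).mulVec (w ((N : ℤ) - i + 1))))) :
    (∀ i : ℤ, 3 ≤ i → ρ (-i) = M⁻¹ * ρ ((N : ℤ) - i - 1) * ℬ i) ∧
    (∀ i : ℤ, 4 ≤ i → i ≤ (N : ℤ) → IsUnit (ℬ i) →
      K (-i) = (ℬ i)⁻¹ * K ((N : ℤ) - i - 1) * ℬ (i - 1)) := by
  have hMd : IsUnit M.det := by rw [hM]; exact isUnit_one
  -- the gauge step: ρ_{j+1} = ρ_j K_j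
  have hstep : ∀ j : ℤ, ρ (j + 1) = ρ j * K j := by
    intro j
    rw [hρ (j + 1), show j + 1 + 1 = j + 2 from by ring, show j + 1 + 2 = j + 3 from by ring,
      hrec j, hρ j, hK j, colMat_step]
  -- the key vector identity
  have key : ∀ m : ℤ, m ≤ (N : ℤ) - 2 → M.mulVec (V (m + 1 - N)) =
      (c (m + 3) * d m) • (c m • V m + b m • V (m + 1)) := by
    intro m hm
    have hb := hbwd ((N : ℤ) - m - 1) (by omega)
    rw [show -((N : ℤ) - m - 1) = m + 1 - N from by ring,
      show (N : ℤ) - ((N : ℤ) - m - 1) + 1 = m + 2 from by ring] at hb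
    rw [hb, Matrix.mulVec_mulVec, Matrix.mul_nonsing_inv M hMd, Matrix.one_mulVec,
      hTbar, show m + 2 + 1 = m + 3 from by ring, show m + 2 - 2 = m from by ring,
      show m + 2 - 1 = m + 1 from by ring, hrec m,
      cross_key (V m) (V (m + 1)) (V (m + 2)) (a m) (b m) (c m), smul_smul, hd m, hρ m]
  have key2 : ∀ m : ℤ, m ≤ (N : ℤ) - 2 → M.mulVec (V (m + 1 - N)) =
      (c (m + 3) * d m) • (ρ m).mulVec (w m) := by
    intro m hm
    rw [key m hm, hρ m, hw m, colMat_mulVec_w]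
  have part1 : ∀ i : ℤ, 3 ≤ i → ρ (-i) = M⁻¹ * ρ ((N : ℤ) - i - 1) * ℬ i := by
    intro i hi
    have E0 : M.mulVec (V (-i)) =
        (ρ ((N : ℤ) - i - 1)).mulVec ((c ((N : ℤ) - i + 2) * d ((N : ℤ) - i - 1)) • w ((N : ℤ) - i - 1)) := by
      rw [Matrix.mulVec_smul]
      have h0 := key2 ((N : ℤ) - i - 1) (by omega)
      rw [show (N : ℤ) - i - 1 + 1 - (N : ℤ) = -i from by ring,
        show (N : ℤ) - i - 1 + 3 = (N : ℤ) - i + 2 from by ring] at h0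
      exact h0
    have E1 : M.mulVec (V (-i + 1)) =
        (ρ ((N : ℤ) - i - 1)).mulVec ((c ((N : ℤ) - i + 3) * d ((N : ℤ) - i)) •
          (K ((N : ℤ) - i - 1)).mulVec (w ((N : ℤ) - i))) := by
      rw [Matrix.mulVec_smul, Matrix.mulVec_mulVec]
      have hs := hstep ((N : ℤ) - i - 1)
      rw [show (N : ℤ) - i - 1 + 1 = (N : ℤ) - i from by ring] at hs
      rw [← hs]
      have h0 := key2 ((N : ℤ) - i) (by omega)
      rw [show (N : ℤ) - i + 1 - (N : ℤ) = -i + 1 from by ring] at h0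
      exact h0
    have E2 : M.mulVec (V (-i + 2)) =
        (ρ ((N : ℤ) - i - 1)).mulVec ((c ((N : ℤ) - i + 4) * d ((N : ℤ) - i + 1)) •
          ((K ((N : ℤ) - i - 1) * K ((N : ℤ) - i)).mulVec (w ((N : ℤ) - i + 1)))) := by
      rw [Matrix.mulVec_smul, Matrix.mulVec_mulVec, ← Matrix.mul_assoc]
      have hs1 := hstep ((N : ℤ) - i - 1)
      rw [show (N : ℤ) - i - 1 + 1 = (N : ℤ) - i from by ring] at hs1
      have hs2 := hstep ((N : ℤ) - i)
      rw [← hs1, ← hs2]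
      have h0 := key2 ((N : ℤ) - i + 1) (by omega)
      rw [show (N : ℤ) - i + 1 + 1 - (N : ℤ) = -i + 2 from by ring,
        show (N : ℤ) - i + 1 + 3 = (N : ℤ) - i + 4 from by ring] at h0
      exact h0
    have hS : M * ρ (-i) = ρ ((N : ℤ) - i - 1) * ℬ i := by
      rw [hρ (-i), mul_colMat, hℬ i, mul_colMat, E0, E1, E2]
    rw [Matrix.mul_assoc, ← hS, ← Matrix.mul_assoc, Matrix.nonsing_inv_mul M hMd, Matrix.one_mul]
  refine ⟨part1, ?_⟩
  intro i hi4 hiN hB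
  have hBd : IsUnit (ℬ i).det := (Matrix.isUnit_iff_isUnit_det _).1 hB
  have hρd : IsUnit (ρ (-i)).det := (Matrix.isUnit_iff_isUnit_det _).1 (hρinv (-i))
  have h1 := part1 i (by omega)
  have h2 := part1 (i - 1) (by omega)
  rw [show -(i - 1) = -i + 1 from by ring,
    show (N : ℤ) - (i - 1) - 1 = (N : ℤ) - i from by ring] at h2
  have h3 := hstep (-i)
  have hsN := hstep ((N : ℤ) - i - 1)
  rw [show (N : ℤ) - i - 1 + 1 = (N : ℤ) - i from by ring] at hsN
  have hmain : ρ (-i) * ((ℬ i)⁻¹ * K ((N : ℤ) - i - 1) * ℬ (i - 1)) = ρ (-i) * K (-i) := by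
    rw [← h3, h2, hsN, h1]
    calc M⁻¹ * ρ ((N : ℤ) - i - 1) * ℬ i * ((ℬ i)⁻¹ * K ((N : ℤ) - i - 1) * ℬ (i - 1))
        = M⁻¹ * ρ ((N : ℤ) - i - 1) * (ℬ i * (ℬ i)⁻¹) * K ((N : ℤ) - i - 1) * ℬ (i - 1) := by
          simp only [Matrix.mul_assoc]
      _ = M⁻¹ * (ρ ((N : ℤ) - i - 1) * K ((N : ℤ) - i - 1)) * ℬ (i - 1) := by
          rw [Matrix.mul_nonsing_inv _ hBd, Matrix.mul_one, Matrix.mul_assoc M⁻¹]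
  have := congrArg (fun X => (ρ (-i))⁻¹ * X) hmain
  simp only [← Matrix.mul_assoc, Matrix.nonsing_inv_mul _ hρd, Matrix.one_mul] at this
  exact this.symm
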